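/- arXiv:1205.1223 — 8 statements merged into one kernel-verified Lean document; each statement's English description precedes it below -/
import Mathlib

section
/- Suppose f, g ∈ ℝ[x₁,…,xₙ] are coprime. Then for any point a ∈ ℝ^{n-1} and any r > 0, there exists a point a' ∈ ℝ^{n-1} with ‖a - a'‖ < r such that for all t ∈ ℝ, the point (a', t) is not a common real zero of f and g. -/
/-!
Move the last variable to the front and view `f`, `g` as polynomials in `t` over
`A = ℝ[x₁, …, x_{n-1}]`. By Gauss's lemma they stay coprime over the principal ideal domain
`Frac(A)[t]`, so clearing denominators gives `u f + v g = d` with `0 ≠ d ∈ A`. Hence there is no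
common zero above any `a'` with `d(a') ≠ 0`, and such `a'` are dense because a nonzero polynomial
cannot vanish on an open set.
-/

open MvPolynomial

open scoped nonZeroDivisors Topology

theorem IsRelPrime.map_mulEquiv {M N : Type*} [CommMonoid M] [CommMonoid N] (e : M ≃* N)
    {x y : M} (h : IsRelPrime x y) : IsRelPrime (e x) (e y) := by
  intro d hx hy
  rw [← e.apply_symm_apply d, map_dvd_iff] at hx hy
  simpa using (h hx hy).map e

theorem MvPolynomial.dense_setOf_eval_ne_zero {R σ : Type*} [CommRing R] [IsDomain R]
    [TopologicalSpace R] [T1Space R] [∀ x : R, (𝓝[≠] x).NeBot] [Finite σ]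
    {p : MvPolynomial σ R} (hp : p ≠ 0) : Dense {x : σ → R | eval x p ≠ 0} := by
  refine dense_iff_inter_open.mpr fun U hU ⟨x, hx⟩ => ?_
  obtain ⟨u, hu, hxu⟩ := isOpen_pi_iff'.mp hU x hx
  by_contra! hzero
  refine hp (funext_set u (fun i => infinite_of_mem_nhds (x i) ((hu i).1.mem_nhds (hu i).2))
    fun y hy => ?_)
  by_contra hy0
  exact hzero.subset ⟨hxu hy, hy0⟩

theorem MvPolynomial.eval_snoc_eq_eval_cons_rename {R : Type*} [CommSemiring R] {n : ℕ}
    (a : Fin n → R) (t : R) (p : MvPolynomial (Fin (n + 1)) R) :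
    eval (Fin.snoc a t) p = eval (Fin.cons t a) (rename (finRotate (n + 1)) p) := by
  rw [eval_rename, Fin.snoc_eq_cons_rotate]
  rfl

namespace Polynomial

open IsLocalization

variable {R K : Type*} [CommRing R] [IsDomain R] [Field K] [Algebra R K] [IsFractionRing R K]

theorem map_primPart_integerNormalization_dvd [NormalizedGCDMonoid R] (q : K[X]) :
    (integerNormalization R⁰ q).primPart.map (algebraMap R K) ∣ q := by
  obtain ⟨b, hb, hbq⟩ := integerNormalization_spec R⁰ q
  have hb_unit : IsUnit (C (algebraMap R K b)) :=
    isUnit_C.mpr (IsUnit.mk0 _ (IsFractionRing.to_map_ne_zero_of_mem_nonZeroDivisors hb))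
  have hbq' : C (algebraMap R K b) * q = (integerNormalization R⁰ q).map (algebraMap R K) := by
    rw [hbq, Algebra.smul_def, algebraMap_apply]
  rw [← hb_unit.dvd_mul_left, hbq']
  exact Polynomial.map_dvd _ (primPart_dvd _)

theorem isRelPrime_map_fractionRing [NormalizedGCDMonoid R] {F G : R[X]} (h : IsRelPrime F G) :
    IsRelPrime (F.map (algebraMap R K)) (G.map (algebraMap R K)) := by
  intro q hF hG
  obtain rfl | hq := eq_or_ne q 0
  · rw [zero_dvd_iff, Polynomial.map_eq_zero_iff (IsFractionRing.injective R K)] at hF hG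
    subst hF hG
    exact absurd (h dvd_rfl dvd_rfl) not_isUnit_zero
  refine isUnit_or_eq_zero_of_isUnit_integerNormalization_primPart hq (h ?_ ?_) <;>
    exact (isPrimitive_primPart _).dvd_of_fraction_map_dvd_fraction_map
      ((map_primPart_integerNormalization_dvd q).trans ‹_›)

theorem exists_mul_add_mul_eq_C_of_isCoprime_map {F G : R[X]}
    (h : IsCoprime (F.map (algebraMap R K)) (G.map (algebraMap R K))) :
    ∃ d ≠ (0 : R), ∃ u v : R[X], u * F + v * G = C d := by
  obtain ⟨u, v, huv⟩ := h
  obtain ⟨b, hb, hbu⟩ := integerNormalization_spec R⁰ u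
  obtain ⟨c, hc, hcv⟩ := integerNormalization_spec R⁰ v
  refine ⟨b * c, mul_ne_zero (nonZeroDivisors.ne_zero hb) (nonZeroDivisors.ne_zero hc),
    C c * integerNormalization R⁰ u, C b * integerNormalization R⁰ v,
    map_injective _ (IsFractionRing.injective R K) ?_⟩
  simp only [Polynomial.map_add, Polynomial.map_mul, map_C, hbu, hcv, Algebra.smul_def,
    algebraMap_apply, map_mul]
  linear_combination (C (algebraMap R K b) * C (algebraMap R K c)) * huv

theorem exists_mul_add_mul_eq_C_of_isRelPrime [NormalizedGCDMonoid R] {F G : R[X]}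
    (h : IsRelPrime F G) : ∃ d ≠ (0 : R), ∃ u v : R[X], u * F + v * G = C d :=
  exists_mul_add_mul_eq_C_of_isCoprime_map (K := FractionRing R)
    (isRelPrime_map_fractionRing h).isCoprime

end Polynomial

theorem MvPolynomial.exists_ne_zero_forall_eval_cons {R : Type*} [CommRing R] [IsDomain R]
    [UniqueFactorizationMonoid R] {n : ℕ} {f g : MvPolynomial (Fin (n + 1)) R}
    (h : IsRelPrime f g) :
    ∃ d : MvPolynomial (Fin n) R, d ≠ 0 ∧ ∀ a, eval a d ≠ 0 → ∀ t,
      eval (Fin.cons t a) f = 0 → eval (Fin.cons t a) g ≠ 0 := by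
  let := UniqueFactorizationMonoid.strongNormalizationMonoid (α := MvPolynomial (Fin n) R)
  let := UniqueFactorizationMonoid.toNormalizedGCDMonoid (MvPolynomial (Fin n) R)
  obtain ⟨d, hd, u, v, huv⟩ := Polynomial.exists_mul_add_mul_eq_C_of_isRelPrime
    (h.map_mulEquiv (finSuccEquiv R n).toMulEquiv)
  refine ⟨d, hd, fun a had t hf hg => had ?_⟩
  have := congrArg ((Polynomial.evalRingHom t).comp (Polynomial.mapRingHom (eval a))) huv
  simp only [RingHom.comp_apply, map_add, map_mul] at this
  simpa [← eval_eq_eval_mv_eval', hf, hg] using this.symm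

theorem stmt_2 (n : ℕ) (f g : MvPolynomial (Fin (n + 1)) ℝ) (h : IsRelPrime f g)
    (a : Fin n → ℝ) (r : ℝ) (hr : 0 < r) :
    ∃ a' : Fin n → ℝ, Real.sqrt (∑ i, (a i - a' i) ^ 2) < r ∧
      ∀ t : ℝ, ¬ (MvPolynomial.eval (Fin.snoc a' t) f = 0 ∧
                   MvPolynomial.eval (Fin.snoc a' t) g = 0) := by
  obtain ⟨d, hd, hd_eval⟩ := exists_ne_zero_forall_eval_cons
    (h.map_mulEquiv (renameEquiv ℝ (finRotate (n + 1))).toMulEquiv)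
  have hball : IsOpen {a' : Fin n → ℝ | Real.sqrt (∑ i, (a i - a' i) ^ 2) < r} :=
    isOpen_lt (by fun_prop) continuous_const
  obtain ⟨a', had, ha'⟩ :=
    (dense_setOf_eval_ne_zero hd).exists_mem_open hball ⟨a, by simpa using hr⟩
  refine ⟨a', ha', fun t ⟨hf, hg⟩ => hd_eval a' had t ?_ ?_⟩
  · simpa [eval_snoc_eq_eval_cons_rename] using hf
  · simpa [eval_snoc_eq_eval_cons_rename] using hg
end

section
/- Let f(x) ∈ ℝ[x] be a monic squarefree polynomial of degree l with r real roots. Then the sign of the discriminant of f equals (-1)^{(l-r)/2}. -/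
open Polynomial

lemma sign_of_involutive {n : ℕ} (σ : Equiv.Perm (Fin n)) (h : σ * σ = 1) :
    Equiv.Perm.sign σ = (-1 : ℤˣ) ^ (σ.support.card / 2) := by
  have h2 : ∀ a ∈ σ.cycleType, a = 2 := by
    intro a ha
    have hd : a ∣ 2 := (Equiv.Perm.dvd_of_mem_cycleType ha).trans
      (orderOf_dvd_of_pow_eq_one (by rw [pow_two]; exact h))
    exact le_antisymm (Nat.le_of_dvd two_pos hd) (Equiv.Perm.two_le_of_mem_cycleType ha)
  have hsum : σ.cycleType.sum = 2 * Multiset.card σ.cycleType := by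
    rw [Multiset.eq_replicate_of_mem h2, Multiset.sum_replicate, Multiset.card_replicate]
    simp [mul_comm]
  have hsupp : σ.support.card = 2 * Multiset.card σ.cycleType := by
    rw [← Equiv.Perm.sum_cycleType, hsum]
  rw [Equiv.Perm.sign_of_cycleType, hsum, hsupp]
  rw [Nat.mul_div_cancel_left _ two_pos]
  rw [pow_add, pow_mul]
  simp

/-- For a monic squarefree real polynomial `f` of degree `l ≥ 1` whose
complex roots are `z 0, …, z (l-1)`, with `r` the number of distinct real roots,
the discriminant `∏_{i<j} (z i - z j)^2` is a real number of sign `(-1)^((l-r)/2)`. -/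
theorem stmt_3 (f : Polynomial ℝ) (l : ℕ) (hl : 1 ≤ l)
    (hmonic : f.Monic) (hsf : Squarefree f) (hdeg : f.natDegree = l)
    (z : Fin l → ℂ)
    (hz : f.map (algebraMap ℝ ℂ) = ∏ i, (Polynomial.X - Polynomial.C (z i)))
    (r : ℕ) (hr : r = f.roots.toFinset.card) :
    ∃ c : ℝ, 0 < c ∧
      (∏ i, ∏ j ∈ Finset.Ioi i, (z i - z j) ^ 2) = (((-1 : ℝ) ^ ((l - r) / 2) * c : ℝ) : ℂ) := by
  have hf0 : f ≠ 0 := hmonic.ne_zero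
  have hsep : f.Separable := (PerfectField.separable_iff_squarefree).mpr hsf
  have hinj : Function.Injective z := by
    have := hsep.map (f := algebraMap ℝ ℂ)
    rw [hz] at this
    exact Polynomial.separable_prod_X_sub_C_iff.mp this
  -- roots of the complexified polynomial
  have hroot : ∀ w : ℂ, (Polynomial.aeval w f = 0) ↔ ∃ i, z i = w := by
    intro w
    rw [Polynomial.aeval_def, ← Polynomial.eval_map, hz]
    simp only [Polynomial.eval_prod, Polynomial.eval_sub, Polynomial.eval_X, Polynomial.eval_C]
    rw [Finset.prod_eq_zero_iff]
    simp [sub_eq_zero, eq_comm]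
  have hconjmem : ∀ i, ∃ j, z j = (starRingEnd ℂ) (z i) := by
    intro i
    apply (hroot _).mp
    rw [Polynomial.aeval_conj]
    simp [(hroot (z i)).mpr ⟨i, rfl⟩]
  choose g hg using hconjmem
  have hginv : Function.Involutive g := by
    intro i
    apply hinj
    rw [hg, hg, Complex.conj_conj]
  set σ : Equiv.Perm (Fin l) := hginv.toPerm with hσdef
  have hσ : ∀ i, z (σ i) = (starRingEnd ℂ) (z i) := hg
  have hσ2 : σ * σ = 1 := by
    ext i
    simp [hσdef, hginv i]
  -- Vandermonde determinant
  set A : ℂ := ∏ i, ∏ j ∈ Finset.Ioi i, (z j - z i) with hAdef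
  have hA : (Matrix.vandermonde z).det = A := Matrix.det_vandermonde z
  have hconjA : (starRingEnd ℂ) A = ((Equiv.Perm.sign σ : ℤ) : ℂ) * A := by
    rw [← hA, RingHom.map_det, RingHom.mapMatrix_apply]
    have hmap : (Matrix.vandermonde z).map (starRingEnd ℂ)
        = (Matrix.vandermonde z).submatrix σ id := by
      ext i j
      simp [Matrix.vandermonde, ← hσ i, map_pow]
    rw [hmap, Matrix.det_permute, hA]
  -- fixed points of σ are the real roots
  have hfix : ∀ i, (σ i = i ↔ (z i).im = 0) := by
    intro i
    rw [← Complex.conj_eq_iff_im, ← hσ]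
    exact ⟨fun h => by rw [h], fun h => hinj h⟩
  have hFcard : (Finset.univ.filter fun i => (z i).im = 0).card = r := by
    rw [hr]
    apply Finset.card_bij (fun i _ => (z i).re)
    · intro i hi
      simp only [Finset.mem_filter, Finset.mem_univ, true_and] at hi
      have hzi : (((z i).re : ℝ) : ℂ) = z i := by
        rw [← Complex.conj_eq_iff_re, Complex.conj_eq_iff_im]; exact hi
      rw [Multiset.mem_toFinset, Polynomial.mem_roots hf0]
      have h0 : Polynomial.aeval (((z i).re : ℂ)) f = 0 := by
        rw [hzi]; exact (hroot _).mpr ⟨i, rfl⟩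
      rw [← Complex.coe_algebraMap, Polynomial.aeval_algebraMap_apply_eq_algebraMap_eval,
        Complex.coe_algebraMap] at h0
      exact_mod_cast h0
    · intro i hi j hj hij
      simp only [Finset.mem_filter, Finset.mem_univ, true_and] at hi hj
      apply hinj
      have hzi : (((z i).re : ℝ) : ℂ) = z i := by
        rw [← Complex.conj_eq_iff_re, Complex.conj_eq_iff_im]; exact hi
      have hzj : (((z j).re : ℝ) : ℂ) = z j := by
        rw [← Complex.conj_eq_iff_re, Complex.conj_eq_iff_im]; exact hj
      rw [← hzi, ← hzj, hij]
    · intro x hx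
      rw [Multiset.mem_toFinset, Polynomial.mem_roots hf0] at hx
      have h0 : Polynomial.aeval ((x : ℝ) : ℂ) f = 0 := by
        rw [← Complex.coe_algebraMap, Polynomial.aeval_algebraMap_apply_eq_algebraMap_eval]
        simp [hx.eq_zero]
      obtain ⟨i, hi⟩ := (hroot _).mp h0
      refine ⟨i, ?_, ?_⟩
      · simp only [Finset.mem_filter, Finset.mem_univ, true_and]
        rw [hi]; simp
      · rw [hi]; simp
  have hsuppcard : σ.support.card = l - r := by
    have hs : σ.support = Finset.univ.filter fun i => ¬ (z i).im = 0 := by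
      ext i
      simp [Equiv.Perm.mem_support, hfix i]
    have hsplit := Finset.card_filter_add_card_filter_not
      (s := (Finset.univ : Finset (Fin l))) (p := fun i => (z i).im = 0)
    rw [hs]
    rw [Finset.card_univ, Fintype.card_fin] at hsplit
    omega
  set m : ℕ := (l - r) / 2 with hmdef
  have hsign : Equiv.Perm.sign σ = (-1 : ℤˣ) ^ m := by
    rw [sign_of_involutive σ hσ2, hsuppcard]
  have hconjA' : (starRingEnd ℂ) A = (-1 : ℂ) ^ m * A := by
    rw [hconjA, hsign]
    push_cast
    ring
  have hAne : A ≠ 0 := by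
    rw [hAdef]
    apply Finset.prod_ne_zero_iff.mpr
    intro i _
    apply Finset.prod_ne_zero_iff.mpr
    intro j hj
    have hij : j ≠ i := (Finset.mem_Ioi.mp hj).ne'
    exact sub_ne_zero.mpr fun h => hij (hinj h)
  have hLHS : (∏ i, ∏ j ∈ Finset.Ioi i, (z i - z j) ^ 2) = A ^ 2 := by
    rw [hAdef, ← Finset.prod_pow]
    refine Finset.prod_congr rfl fun i _ => ?_
    rw [← Finset.prod_pow]
    exact Finset.prod_congr rfl fun j _ => by ring
  rcases Nat.even_or_odd m with hm | hm
  · -- even case : A is real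
    have him : A.im = 0 := by
      have : (starRingEnd ℂ) A = A := by rw [hconjA', hm.neg_one_pow, one_mul]
      exact Complex.conj_eq_iff_im.mp this
    have hre : A.re ≠ 0 := fun h => hAne (Complex.ext (by simp [h]) (by simp [him]))
    refine ⟨A.re ^ 2, by positivity, ?_⟩
    rw [hLHS, hm.neg_one_pow, one_mul]
    have hAeq : A = ((A.re : ℝ) : ℂ) := by
      rw [eq_comm, ← Complex.conj_eq_iff_re, Complex.conj_eq_iff_im]; exact him
    rw [hAeq]
    push_cast
    simp
  · -- odd case : A is purely imaginary
    have hre : A.re = 0 := by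
      have h1 : (starRingEnd ℂ) A = -A := by rw [hconjA', hm.neg_one_pow]; ring
      have h2 := congrArg Complex.re h1
      simp only [Complex.conj_re, Complex.neg_re] at h2
      linarith
    have him : A.im ≠ 0 := fun h => hAne (Complex.ext (by simp [hre]) (by simp [h]))
    refine ⟨A.im ^ 2, by positivity, ?_⟩
    rw [hLHS, hm.neg_one_pow]
    have hAeq : A = (A.im : ℂ) * Complex.I := by
      rw [← Complex.re_add_im A, hre]; simp
    rw [hAeq]
    rw [mul_pow, Complex.I_sq]
    push_cast
    simp
end

section
/- Let f(x) ∈ ℝ[x] be a squarefree polynomial of degree l with positive leading coefficient and r real roots. Then the sign of its discriminant is (-1)^{(l-r)/2}. -/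
open Polynomial

/-- For a squarefree real polynomial `f` of degree `l ≥ 1` with positive
leading coefficient, complex roots `z 0, …, z (l-1)` and `r` distinct real roots, the
discriminant `lc(f)^(2l-2) * ∏_{i<j} (z i - z j)^2` has sign `(-1)^((l-r)/2)`. -/
theorem stmt_4 (f : Polynomial ℝ) (l : ℕ) (hl : 1 ≤ l)
    (hlc : 0 < f.leadingCoeff) (hsf : Squarefree f) (hdeg : f.natDegree = l)
    (z : Fin l → ℂ)
    (hz : f.map (algebraMap ℝ ℂ) =
      Polynomial.C ((f.leadingCoeff : ℂ)) * ∏ i, (Polynomial.X - Polynomial.C (z i)))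
    (r : ℕ) (hr : r = f.roots.toFinset.card) :
    ∃ c : ℝ, 0 < c ∧
      ((f.leadingCoeff : ℂ) ^ (2 * l - 2) * ∏ i, ∏ j ∈ Finset.Ioi i, (z i - z j) ^ 2)
        = (((-1 : ℝ) ^ ((l - r) / 2) * c : ℝ) : ℂ) := by
  classical
  have hf0 : f ≠ 0 := hsf.ne_zero
  have hmap0 : f.map (algebraMap ℝ ℂ) ≠ 0 := by
    simpa using (Polynomial.map_ne_zero_iff (algebraMap ℝ ℂ).injective).mpr hf0
  have hsep : f.Separable := PerfectField.separable_iff_squarefree.mpr hsf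
  have hroots : (f.map (algebraMap ℝ ℂ)).roots = Multiset.map z Finset.univ.val := by
    rw [hz, roots_C_mul _ (by exact_mod_cast hlc.ne')]
    rw [show (∏ i, (X - Polynomial.C (z i))) =
      ((Multiset.map z Finset.univ.val).map fun a => X - Polynomial.C a).prod by
        rw [Multiset.map_map]; rfl]
    exact roots_multiset_prod_X_sub_C _
  have hnodup : (Multiset.map z Finset.univ.val).Nodup := by
    rw [← hroots]; exact nodup_roots hsep.map
  have hzinj : Function.Injective z := by
    intro i j hij
    exact Multiset.inj_on_of_nodup_map hnodup i (Finset.mem_univ_val i) j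
      (Finset.mem_univ_val j) hij
  -- membership characterization
  have hmem : ∀ w : ℂ, (∃ i, z i = w) ↔ Polynomial.aeval w f = 0 := by
    intro w
    rw [Polynomial.aeval_def, ← eval_map]
    constructor
    · rintro ⟨i, rfl⟩
      have : z i ∈ (f.map (algebraMap ℝ ℂ)).roots := by
        rw [hroots]; exact Multiset.mem_map_of_mem z (Finset.mem_univ_val i)
      exact (mem_roots hmap0).mp this
    · intro hw
      have : w ∈ (f.map (algebraMap ℝ ℂ)).roots := (mem_roots hmap0).mpr hw
      rw [hroots] at this
      obtain ⟨i, _, hi⟩ := Multiset.mem_map.mp this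
      exact ⟨i, hi⟩
  have hex : ∀ i, ∃ j, z j = (starRingEnd ℂ) (z i) := by
    intro i
    apply (hmem _).mpr
    rw [Polynomial.aeval_conj]
    rw [(hmem (z i)).mp ⟨i, rfl⟩]
    simp
  set g : Fin l → Fin l := fun i => Classical.choose (hex i) with hg
  have hgz : ∀ i, z (g i) = (starRingEnd ℂ) (z i) := fun i => Classical.choose_spec (hex i)
  have hginj : Function.Injective g := by
    intro i j hij
    apply hzinj
    have := congrArg z hij
    rw [hgz, hgz] at this
    exact (starRingEnd ℂ).injective this
  set σ : Equiv.Perm (Fin l) := Equiv.ofBijective g (Finite.injective_iff_bijective.mp hginj)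
    with hσ
  have hσap : ∀ i, σ i = g i := fun i => rfl
  have hinv : σ * σ = 1 := by
    apply Equiv.ext
    intro i
    rw [Equiv.Perm.mul_apply, Equiv.Perm.one_apply, hσap, hσap]
    apply hzinj
    rw [hgz, hgz]
    simp
  -- cycle type
  set k : ℕ := Multiset.card σ.cycleType with hk
  have hct : σ.cycleType = Multiset.replicate k 2 := by
    rw [hk, Multiset.eq_replicate_card]
    intro n hn
    have h2 : 2 ≤ n := Equiv.Perm.two_le_of_mem_cycleType hn
    have hdvd : n ∣ 2 := by
      have := Multiset.dvd_lcm hn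
      rw [Equiv.Perm.lcm_cycleType] at this
      exact this.trans (orderOf_dvd_of_pow_eq_one (by rw [pow_two]; exact hinv))
    exact le_antisymm (Nat.le_of_dvd two_pos hdvd) h2
  have hsupp : σ.support.card = 2 * k := by
    rw [← Equiv.Perm.sum_cycleType, hct, Multiset.sum_replicate, smul_eq_mul, mul_comm]
  have hsign : Equiv.Perm.sign σ = (-1) ^ k := by
    rw [Equiv.Perm.sign_of_cycleType, hct]
    simp [Multiset.sum_replicate, pow_add, pow_mul, hk]
  -- key evaluation at real points
  have key : ∀ a : ℝ, Polynomial.aeval ((a : ℂ)) f = ((f.eval a : ℝ) : ℂ) := fun a => by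
    rw [show ((a : ℂ)) = algebraMap ℝ ℂ a from rfl,
      aeval_algebraMap_apply_eq_algebraMap_eval]
    rfl
  -- fixed points count equals number of real roots
  have hfix : (Finset.univ.filter (fun i => g i = i)).card = f.roots.toFinset.card := by
    apply Finset.card_bij (fun i _ => (z i).re)
    · intro i hi
      have hgi : g i = i := (Finset.mem_filter.mp hi).2
      have hci : (starRingEnd ℂ) (z i) = z i := by rw [← hgz, hgi]
      have hre : ((z i).re : ℂ) = z i := Complex.conj_eq_iff_re.mp hci
      rw [Multiset.mem_toFinset, mem_roots hf0]
      have h0 : Polynomial.aeval (z i) f = 0 := (hmem _).mp ⟨i, rfl⟩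
      rw [← hre] at h0
      have : ((f.eval (z i).re : ℝ) : ℂ) = 0 := by rw [← key, h0]
      exact_mod_cast this
    · intro i hi j hj hij
      have hgi : g i = i := (Finset.mem_filter.mp hi).2
      have hgj : g j = j := (Finset.mem_filter.mp hj).2
      have hrei : ((z i).re : ℂ) = z i := Complex.conj_eq_iff_re.mp (by rw [← hgz, hgi])
      have hrej : ((z j).re : ℂ) = z j := Complex.conj_eq_iff_re.mp (by rw [← hgz, hgj])
      apply hzinj
      rw [← hrei, ← hrej, hij]
    · intro a ha
      rw [Multiset.mem_toFinset, mem_roots hf0] at ha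
      have : Polynomial.aeval ((a : ℂ)) f = 0 := by
        have : ((f.eval a : ℝ) : ℂ) = 0 := by exact_mod_cast ha
        rw [key, this]
      obtain ⟨i, hi⟩ := (hmem _).mpr this
      refine ⟨i, Finset.mem_filter.mpr ⟨Finset.mem_univ _, ?_⟩, by rw [hi]; simp⟩
      apply hzinj
      rw [hgz, hi]
      simp
  -- support is the complement of fixed points
  have hcardsplit : (Finset.univ.filter (fun i => g i = i)).card + σ.support.card = l := by
    have : σ.support = Finset.univ.filter (fun i => ¬ g i = i) := by
      ext i
      simp [Equiv.Perm.mem_support, hσap]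
    rw [this]
    rw [Finset.card_filter_add_card_filter_not]
    simp
  have hrl : r + 2 * k = l := by rw [hr, ← hfix, ← hsupp]; exact hcardsplit
  have hlr : (l - r) / 2 = k := by omega
  -- Vandermonde
  set V : ℂ := ∏ i, ∏ j ∈ Finset.Ioi i, (z j - z i) with hV
  have hV0 : V ≠ 0 := by
    rw [hV]
    apply Finset.prod_ne_zero_iff.mpr
    intro i _
    apply Finset.prod_ne_zero_iff.mpr
    intro j hj
    have : i < j := Finset.mem_Ioi.mp hj
    exact sub_ne_zero_of_ne (fun h => absurd (hzinj h) this.ne')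
  have hconjV : (starRingEnd ℂ) V = (-1 : ℂ) ^ k * V := by
    have h1 : (starRingEnd ℂ) V = ∏ i, ∏ j ∈ Finset.Ioi i, (z (σ j) - z (σ i)) := by
      rw [hV, map_prod]
      refine Finset.prod_congr rfl fun i _ => ?_
      rw [map_prod]
      refine Finset.prod_congr rfl fun j _ => ?_
      rw [map_sub, ← hgz, ← hgz, hσap, hσap]
    have h2 : Matrix.vandermonde (fun i => z (σ i)) = (Matrix.vandermonde z).submatrix σ id := by
      ext i j
      simp [Matrix.vandermonde]
    have h3 : (∏ i, ∏ j ∈ Finset.Ioi i, (z (σ j) - z (σ i)))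
        = ((Equiv.Perm.sign σ : ℤ) : ℂ) * V := by
      rw [← Matrix.det_vandermonde, h2, Matrix.det_permute, hV, Matrix.det_vandermonde]
    rw [h1, h3, hsign]
    push_cast
    ring
  -- the squared product
  have hprod : (∏ i, ∏ j ∈ Finset.Ioi i, (z i - z j) ^ 2) = V ^ 2 := by
    rw [hV, ← Finset.prod_pow]
    refine Finset.prod_congr rfl fun i _ => ?_
    rw [← Finset.prod_pow]
    refine Finset.prod_congr rfl fun j _ => ?_
    rw [← neg_sub (z j) (z i), neg_sq]
  have hVsq : V ^ 2 = (-1 : ℂ) ^ k * ((Complex.normSq V : ℝ) : ℂ) := by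
    have h1 : V * (starRingEnd ℂ) V = ((Complex.normSq V : ℝ) : ℂ) := Complex.mul_conj V
    rw [hconjV] at h1
    have h2 : ((-1 : ℂ) ^ k) * ((-1 : ℂ) ^ k) = 1 := by
      rw [← pow_add, ← two_mul, pow_mul]
      norm_num
    calc V ^ 2 = ((-1 : ℂ) ^ k * (-1 : ℂ) ^ k) * V ^ 2 := by rw [h2, one_mul]
    _ = (-1 : ℂ) ^ k * (V * ((-1 : ℂ) ^ k * V)) := by ring
    _ = (-1 : ℂ) ^ k * ((Complex.normSq V : ℝ) : ℂ) := by rw [h1]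
  refine ⟨f.leadingCoeff ^ (2 * l - 2) * Complex.normSq V, ?_, ?_⟩
  · exact mul_pos (pow_pos hlc _) (Complex.normSq_pos.mpr hV0)
  · rw [hprod, hVsq, hlr]
    push_cast
    ring
end

section
/- Let f ∈ ℝ[x₁,…,xₙ, x_{n+1}] be of degree l ≥ 1 in x_{n+1}, with leading coefficient (as a polynomial in x_{n+1}) not identically zero. Let U ⊆ ℝⁿ be a nonempty open set. If f(a, t) ≥ 0 for all a ∈ U and all t ∈ ℝ, then l is even, and for every a ∈ U one has lc(f, x_{n+1})(a) ≥ 0 and (-1)^{l/2}·discrim(f, x_{n+1})(a) ≥ 0. -/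
/-!
At a point `a ∈ U` where `lc(f)` does not vanish, `p = f(a, ·)` is a nonnegative real
polynomial of degree `l`. Its leading coefficient is positive and `l` is even, since otherwise
`p` would tend to `-∞` at `+∞` or at `-∞`. Moreover `Res(p, p') = lc(p)^(l-1) ∏ p'(z)` over the
complex roots `z` of `p`: a real root of `p` is a minimum, hence a root of `p'`, and kills the
product; otherwise the roots split into conjugate pairs, so the product has the form
`w * conj w ≥ 0`. For even `l` the signs in the defining relation of `D` combine to
`(-1)^(l/2) D(a) lc(a) = Res(p, p') ≥ 0`.

These conditions are closed in `a`, and the points of `U` where `lc(f)` does not vanish are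
dense in `U`, because a real polynomial vanishing on a nonempty open set is zero.
-/

open Polynomial MvPolynomial

/-- The Sylvester matrix of two polynomials `p` (regarded as having degree `m`) and
`q` (regarded as having degree `n`): the first `n` rows carry the coefficients of `p`,
the remaining `m` rows carry the coefficients of `q`. -/
noncomputable def sylvesterMatrix {R : Type*} [CommRing R] (m n : ℕ) (p q : R[X]) :
    Matrix (Fin (n + m)) (Fin (n + m)) R :=
  Matrix.of fun i j =>
    if (i : ℕ) < n then
      (if (i : ℕ) ≤ (j : ℕ) ∧ (j : ℕ) ≤ (i : ℕ) + m then p.coeff (m + i - j) else 0)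
    else
      (if (i : ℕ) - n ≤ (j : ℕ) ∧ (j : ℕ) ≤ ((i : ℕ) - n) + n then
        q.coeff (n + ((i : ℕ) - n) - j) else 0)

/-- The resultant of `p` (of degree `m`) and `q` (of degree `n`). -/
noncomputable def resultant {R : Type*} [CommRing R] (m n : ℕ) (p q : R[X]) : R :=
  (sylvesterMatrix m n p q).det

open ComplexConjugate ComplexOrder

theorem sylvesterMatrix_eq_transpose_submatrix_sylvester {R : Type*} [CommRing R] (m n : ℕ)
    (p q : R[X]) :
    sylvesterMatrix m n p q =
      ((sylvester p q m n).submatrix ((finCongr (add_comm n m)).trans Fin.revPerm)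
        ((finCongr (add_comm n m)).trans Fin.revPerm)).transpose := by
  ext ⟨i, hi⟩ ⟨j, hj⟩
  simp only [sylvesterMatrix, sylvester, Fin.addCases, Matrix.of_apply, Matrix.transpose_apply,
    Matrix.submatrix_apply, Equiv.coe_trans, Function.comp_apply, finCongr_apply, Fin.cast_mk,
    Fin.revPerm_apply, Fin.val_rev, Fin.rev_le_rev, Fin.val_fin_le, Fin.mk_le_mk, Fin.val_castLT,
    Fin.val_subNat, Fin.val_cast, Set.mem_Icc, tsub_le_iff_right, eq_rec_constant, dite_eq_ite]
  split_ifs <;> first | rfl | omega | (congr 1; omega)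

theorem resultant_eq_polynomial_resultant {R : Type*} [CommRing R] (m n : ℕ) (p q : R[X]) :
    _root_.resultant m n p q = Polynomial.resultant p q m n := by
  rw [_root_.resultant, sylvesterMatrix_eq_transpose_submatrix_sylvester, Matrix.det_transpose,
    Matrix.det_submatrix_equiv_self, Polynomial.resultant]

theorem Complex.prod_map_nonneg_of_map_conj_eq {s : Multiset ℂ} (hs : s.map conj = s)
    (him : ∀ z ∈ s, z.im ≠ 0) {F : ℂ → ℂ} (hF : ∀ z, F (conj z) = conj (F z)) :
    0 ≤ (s.map F).prod := by
  set t := s.filter (0 < ·.im)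
  have hsplit : t + t.map conj = s := by
    have hlower : t.map conj = s.filter (fun z => ¬ 0 < z.im) := by
      conv_rhs => rw [← hs]
      rw [Multiset.filter_map]
      refine congrArg _ (Multiset.filter_congr fun z hz => ?_)
      simp only [Function.comp_apply, conj_im, not_lt, neg_nonpos]
      exact ⟨le_of_lt, fun h => h.lt_of_ne (him z hz).symm⟩
    rw [hlower, Multiset.filter_add_not]
  rw [← hsplit, Multiset.map_add, Multiset.prod_add, Multiset.map_map,
    show F ∘ conj = conj ∘ F from funext hF, ← Multiset.map_map, ← map_multiset_prod]
  exact mul_star_self_nonneg _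

namespace Polynomial

theorem leadingCoeff_nonneg_of_eval_nonneg {p : ℝ[X]} (hp : ∀ t, 0 ≤ p.eval t) :
    0 ≤ p.leadingCoeff := by
  by_contra! hlc
  rcases le_or_gt p.degree 0 with hdeg | hdeg
  · rw [eq_C_of_degree_le_zero hdeg] at hp hlc
    simp only [leadingCoeff_C, eval_C] at hp hlc
    exact (hp 0).not_gt hlc
  · obtain ⟨t, ht⟩ :=
      ((tendsto_atBot_of_leadingCoeff_nonpos p hdeg hlc.le).eventually_lt_atBot 0).exists
    exact (hp t).not_gt ht

theorem even_natDegree_of_eval_nonneg {p : ℝ[X]} (hp : ∀ t, 0 ≤ p.eval t) :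
    Even p.natDegree := by
  by_contra hodd
  rw [Nat.not_even_iff_odd] at hodd
  have hp0 : p ≠ 0 := by rintro rfl; simp at hodd
  have hX : (-X : ℝ[X]).natDegree = 1 := by simp
  have hlc : (p.comp (-X)).leadingCoeff = -p.leadingCoeff := by
    rw [leadingCoeff_comp (by rw [hX]; exact one_ne_zero)]
    simp [hodd.neg_one_pow]
  have hcomp := leadingCoeff_nonneg_of_eval_nonneg (p := p.comp (-X)) fun t => by
    simpa using hp (-t)
  rw [hlc, neg_nonneg] at hcomp
  exact leadingCoeff_ne_zero.mpr hp0 (hcomp.antisymm (leadingCoeff_nonneg_of_eval_nonneg hp))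

theorem eval_derivative_eq_zero_of_eval_nonneg {p : ℝ[X]} (hp : ∀ t, 0 ≤ p.eval t) {x : ℝ}
    (hx : p.eval x = 0) : (derivative p).eval x = 0 := by
  have hmin : IsLocalMin (fun t => p.eval t) x := .of_forall fun t => by simpa [hx] using hp t
  simpa using hmin.deriv_eq_zero

theorem aroots_map_conj (p : ℝ[X]) : (p.aroots ℂ).map conj = p.aroots ℂ := by
  rw [aroots, ← (IsAlgClosed.splits _).roots_map, map_map]
  congr 2
  ext x
  simp

theorem resultant_derivative_nonneg_of_eval_nonneg {p : ℝ[X]} (hp : ∀ t, 0 ≤ p.eval t) :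
    0 ≤ p.resultant (derivative p) p.natDegree (p.natDegree - 1) := by
  have hres : ((p.resultant (derivative p) p.natDegree (p.natDegree - 1) : ℝ) : ℂ) =
      (p.leadingCoeff : ℂ) ^ (p.natDegree - 1) *
        ((p.aroots ℂ).map fun z => aeval z (derivative p)).prod := by
    rw [← Complex.coe_algebraMap, ← resultant_map_map, ← derivative_map,
      ← natDegree_map (algebraMap ℝ ℂ),
      resultant_eq_prod_eval _ _ _ (natDegree_derivative_le _) (IsAlgClosed.splits _)]
    simp [aroots, eval_map_algebraMap]
  rw [← Complex.zero_le_real, hres]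
  refine mul_nonneg
    (pow_nonneg (Complex.zero_le_real.mpr (leadingCoeff_nonneg_of_eval_nonneg hp)) _) ?_
  by_cases hreal : ∃ z ∈ p.aroots ℂ, z.im = 0
  · obtain ⟨z, hz, hzim⟩ := hreal
    have hzre : ((z.re : ℝ) : ℂ) = z := Complex.ext rfl hzim.symm
    have hroot : p.eval z.re = 0 := by
      have := (mem_aroots.mp hz).2
      rwa [← hzre, ← Complex.coe_algebraMap, aeval_algebraMap_apply, coe_aeval_eq_eval,
        map_eq_zero] at this
    refine (Multiset.prod_eq_zero (Multiset.mem_map.mpr ⟨z, hz, ?_⟩)).ge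
    rw [← hzre, ← Complex.coe_algebraMap, aeval_algebraMap_apply, coe_aeval_eq_eval,
      eval_derivative_eq_zero_of_eval_nonneg hp hroot, map_zero]
  · push Not at hreal
    exact Complex.prod_map_nonneg_of_map_conj_eq p.aroots_map_conj hreal (aeval_conj _)

end Polynomial

namespace MvPolynomial

variable {σ : Type*} [Fintype σ]

theorem eq_zero_of_eval_eq_zero_of_isOpen {p : MvPolynomial σ ℝ} {U : Set (σ → ℝ)}
    (hU : IsOpen U) (hne : U.Nonempty) (h : ∀ x ∈ U, eval x p = 0) : p = 0 := by
  obtain ⟨a, ha⟩ := hne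
  obtain ⟨ε, hε, hball⟩ := Metric.isOpen_iff.mp hU a ha
  refine funext_set (fun i => Metric.ball (a i) ε)
    (fun i => by simpa [Real.ball_eq_Ioo] using Set.Ioo_infinite (by linarith)) fun x hx => ?_
  rw [h x (hball (by rwa [ball_pi _ hε])), map_zero]

theorem subset_of_isClosed_of_eval_ne_zero {p : MvPolynomial σ ℝ} (hp : p ≠ 0)
    {U S : Set (σ → ℝ)} (hU : IsOpen U) (hS : IsClosed S)
    (h : ∀ x ∈ U, eval x p ≠ 0 → x ∈ S) : U ⊆ S := by
  intro a ha
  by_contra haS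
  refine hp (eq_zero_of_eval_eq_zero_of_isOpen (hU.inter hS.isOpen_compl) ⟨a, ha, haS⟩ ?_)
  rintro x ⟨hxU, hxS⟩
  by_contra hx
  exact hxS (h x hxU hx)

end MvPolynomial

theorem neg_one_pow_half_mul_neg_one_pow_choose_two {R : Type*} [Monoid R] [HasDistribNeg R]
    {l : ℕ} (hl : Even l) : (-1 : R) ^ (l / 2) * (-1) ^ (l * (l - 1) / 2) = 1 := by
  obtain ⟨m, rfl⟩ := hl
  rw [← pow_add]
  refine Even.neg_one_pow ⟨m * m, ?_⟩
  rcases m with _ | m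
  · rfl
  · have h : (m + 1 + (m + 1)) * (m + 1 + (m + 1) - 1) = 2 * ((m + 1) * (2 * m + 1)) := by
      rw [show m + 1 + (m + 1) - 1 = 2 * m + 1 by omega]; ring
    rw [h, Nat.mul_div_cancel_left _ two_pos, show (m + 1 + (m + 1)) / 2 = m + 1 by omega]
    ring

theorem sign_conditions_of_eval_leadingCoeff_ne_zero {σ : Type*} {l : ℕ}
    {f : (MvPolynomial σ ℝ)[X]} (hdeg : f.natDegree = l) {D : MvPolynomial σ ℝ}
    (hD : f.leadingCoeff * D = (-1) ^ (l * (l - 1) / 2) * resultant l (l - 1) f (derivative f))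
    {a : σ → ℝ} (ha : MvPolynomial.eval a f.leadingCoeff ≠ 0)
    (hpos : ∀ t, 0 ≤ (f.map (MvPolynomial.eval a)).eval t) :
    Even l ∧ 0 ≤ MvPolynomial.eval a f.leadingCoeff ∧
      0 ≤ (-1 : ℝ) ^ (l / 2) * MvPolynomial.eval a D := by
  set p := f.map (MvPolynomial.eval a)
  have hpdeg : p.natDegree = l := by rw [natDegree_map_of_leadingCoeff_ne_zero _ ha, hdeg]
  have hplc : p.leadingCoeff = MvPolynomial.eval a f.leadingCoeff :=
    leadingCoeff_map_of_leadingCoeff_ne_zero _ ha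
  have hev : Even l := hpdeg ▸ even_natDegree_of_eval_nonneg hpos
  have hlc : 0 < MvPolynomial.eval a f.leadingCoeff :=
    (hplc ▸ leadingCoeff_nonneg_of_eval_nonneg hpos).lt_of_ne' ha
  have hres : 0 ≤ p.resultant (derivative p) l (l - 1) :=
    hpdeg ▸ resultant_derivative_nonneg_of_eval_nonneg hpos
  have hDa : MvPolynomial.eval a f.leadingCoeff * MvPolynomial.eval a D =
      (-1) ^ (l * (l - 1) / 2) * p.resultant (derivative p) l (l - 1) := by
    have := congrArg (MvPolynomial.eval a) hD
    rwa [map_mul, map_mul, map_pow, map_neg, map_one, resultant_eq_polynomial_resultant,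
      ← resultant_map_map, ← derivative_map] at this
  refine ⟨hev, hlc.le, nonneg_of_mul_nonneg_left ?_ hlc⟩
  calc 0 ≤ p.resultant (derivative p) l (l - 1) := hres
    _ = _ := by
      linear_combination -(-1 : ℝ) ^ (l / 2) * hDa -
        p.resultant (derivative p) l (l - 1) *
          neg_one_pow_half_mul_neg_one_pow_choose_two (R := ℝ) hev

theorem stmt_5_general (n l : ℕ)
    (f : Polynomial (MvPolynomial (Fin n) ℝ))
    (hdeg : f.natDegree = l) (hlc : f.leadingCoeff ≠ 0)
    (D : MvPolynomial (Fin n) ℝ)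
    (hD : f.leadingCoeff * D =
      (-1 : MvPolynomial (Fin n) ℝ) ^ (l * (l - 1) / 2) *
        resultant l (l - 1) f (Polynomial.derivative f))
    (U : Set (Fin n → ℝ)) (hUopen : IsOpen U) (hUne : U.Nonempty)
    (hpos : ∀ a ∈ U, ∀ t : ℝ, 0 ≤ Polynomial.eval t (f.map (MvPolynomial.eval a)))
    : Even l ∧ ∀ a ∈ U,
        0 ≤ MvPolynomial.eval a f.leadingCoeff ∧
        0 ≤ (-1 : ℝ) ^ (l / 2) * MvPolynomial.eval a D := by
  have hclosed : IsClosed {a : Fin n → ℝ | Even l ∧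
      0 ≤ MvPolynomial.eval a f.leadingCoeff ∧ 0 ≤ (-1 : ℝ) ^ (l / 2) * MvPolynomial.eval a D} :=
    isClosed_const.inter ((isClosed_le continuous_const (continuous_eval _)).inter
      (isClosed_le continuous_const (continuous_const.mul (continuous_eval _))))
  have hU := subset_of_isClosed_of_eval_ne_zero hlc hUopen hclosed fun a ha hlca =>
    sign_conditions_of_eval_leadingCoeff_ne_zero hdeg hD hlca (hpos a ha)
  obtain ⟨a₀, ha₀⟩ := hUne
  exact ⟨(hU ha₀).1, fun a ha => (hU ha).2⟩

/-- Let `f ∈ ℝ[x₁,…,xₙ][x_{n+1}]` have degree `l ≥ 1` in the last variable,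
with leading coefficient (in `x_{n+1}`) not identically zero, and let `D` be the
discriminant of `f` with respect to `x_{n+1}`, i.e. the polynomial in `x₁,…,xₙ` with
`lc(f) * D = (-1)^(l(l-1)/2) * Res(f, ∂f/∂x_{n+1})`.  If `U ⊆ ℝⁿ` is a nonempty open set
and `f(a,t) ≥ 0` for all `a ∈ U`, `t ∈ ℝ`, then `l` is even and for every `a ∈ U`,
`lc(f)(a) ≥ 0` and `(-1)^(l/2) · D(a) ≥ 0`. -/
theorem stmt_5 (n l : ℕ) (hl : 1 ≤ l)
    (f : Polynomial (MvPolynomial (Fin n) ℝ))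
    (hdeg : f.natDegree = l) (hlc : f.leadingCoeff ≠ 0)
    (D : MvPolynomial (Fin n) ℝ)
    (hD : f.leadingCoeff * D =
      (-1 : MvPolynomial (Fin n) ℝ) ^ (l * (l - 1) / 2) *
        resultant l (l - 1) f (Polynomial.derivative f))
    (U : Set (Fin n → ℝ)) (hUopen : IsOpen U) (hUne : U.Nonempty)
    (hpos : ∀ a ∈ U, ∀ t : ℝ, 0 ≤ Polynomial.eval t (f.map (MvPolynomial.eval a)))
    : Even l ∧ ∀ a ∈ U,
        0 ≤ MvPolynomial.eval a f.leadingCoeff ∧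
        0 ≤ (-1 : ℝ) ^ (l / 2) * MvPolynomial.eval a D :=
  stmt_5_general n l f hdeg hlc D hD U hUopen hUne hpos
end

section
/- A monic squarefree real univariate polynomial f of even degree l with positive discriminant of sign (-1)^{l/2} need not be positive semi-definite; however, if f(x) ≥ 0 for all x ∈ ℝ and f is squarefree monic of degree l, then l is even and (-1)^{l/2}·discrim(f) > 0. -/
open Polynomial

/-- If `f` is a monic squarefree real polynomial of degree `l` with
`f(x) ≥ 0` for all real `x`, then `l` is even and `(-1)^(l/2) · discrim(f) > 0`,
where the discriminant is `∏_{i<j} (z i - z j)^2` for the complex roots `z i` of `f`. -/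
theorem stmt_6 (f : Polynomial ℝ) (l : ℕ) (hl : 1 ≤ l)
    (hmonic : f.Monic) (hsf : Squarefree f) (hdeg : f.natDegree = l)
    (z : Fin l → ℂ)
    (hz : f.map (algebraMap ℝ ℂ) = ∏ i, (Polynomial.X - Polynomial.C (z i)))
    (hpos : ∀ x : ℝ, 0 ≤ f.eval x) :
    Even l ∧ ∃ c : ℝ, 0 < c ∧
      (∏ i, ∏ j ∈ Finset.Ioi i, (z i - z j) ^ 2) = (((-1 : ℝ) ^ (l / 2) * c : ℝ) : ℂ) := by
  classical
  have hsep : f.Separable := PerfectField.separable_iff_squarefree.mpr hsf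
  -- no real roots
  have hnr : ∀ x : ℝ, f.eval x ≠ 0 := by
    intro x hx
    have hmin : IsLocalMin (fun t => f.eval t) x :=
      Filter.Eventually.of_forall (fun t => by simpa [hx] using hpos t)
    have hd : deriv (fun t => f.eval t) x = 0 := hmin.deriv_eq_zero
    rw [Polynomial.deriv] at hd
    obtain ⟨a, b, hab⟩ := hsep
    have := congrArg (Polynomial.eval x) hab
    simp [hx, hd] at this
  set g := f.map (algebraMap ℝ ℂ) with hg
  have hgsep : g.Separable := hsep.map
  have hprod : g = ((Finset.univ.val.map z).map (fun a => X - C a)).prod := by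
    rw [hz, Finset.prod_eq_multiset_prod, Multiset.map_map]; rfl
  have hroots : g.roots = Finset.univ.val.map z := by
    rw [hprod, roots_multiset_prod_X_sub_C]
  have hnodup : (Finset.univ.val.map z).Nodup := hroots ▸ (Polynomial.nodup_roots hgsep)
  have hzinj : Function.Injective z := fun i j hij =>
    Multiset.inj_on_of_nodup_map hnodup i (Finset.mem_univ i) j (Finset.mem_univ j) hij
  have hgeval : ∀ a : ℝ, g.eval ((a : ℂ)) = ((f.eval a : ℝ) : ℂ) := by
    intro a
    rw [hg, eval_map]
    exact Polynomial.eval₂_at_apply (algebraMap ℝ ℂ) a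
  have hzr : ∀ i, g.eval (z i) = 0 := by
    intro i
    rw [hz, eval_prod]
    exact Finset.prod_eq_zero (Finset.mem_univ i) (by simp)
  have hnotreal : ∀ i, (starRingEnd ℂ) (z i) ≠ z i := by
    intro i h
    have hre : ((z i).re : ℂ) = z i := Complex.conj_eq_iff_re.mp h
    have := hzr i
    rw [← hre, hgeval] at this
    exact hnr (z i).re (by exact_mod_cast this)
  have hconjg : g.map (starRingEnd ℂ) = g := by
    rw [hg, Polynomial.map_map]
    congr 1
    ext a : 1
    simp
  have hkey : Finset.univ.val.map ((starRingEnd ℂ) ∘ z) = Finset.univ.val.map z := by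
    have h1 : g.map (starRingEnd ℂ) = ∏ i, (X - C ((starRingEnd ℂ) (z i))) := by
      rw [hz, Polynomial.map_prod]
      simp
    have h2 : (g.map (starRingEnd ℂ)).roots = Finset.univ.val.map ((starRingEnd ℂ) ∘ z) := by
      rw [h1, Finset.prod_eq_multiset_prod]
      rw [show (Multiset.map (fun i => X - C ((starRingEnd ℂ) (z i))) Finset.univ.val)
        = Multiset.map (fun a => X - C a) (Finset.univ.val.map ((starRingEnd ℂ) ∘ z)) by
          rw [Multiset.map_map]; rfl]
      rw [roots_multiset_prod_X_sub_C]
    rw [← h2, hconjg, hroots]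
  have hex : ∀ i, ∃ j, z j = (starRingEnd ℂ) (z i) := by
    intro i
    have : (starRingEnd ℂ) (z i) ∈ Finset.univ.val.map z := by
      rw [← hkey]
      exact Multiset.mem_map_of_mem _ (Finset.mem_univ i)
    obtain ⟨j, _, hj⟩ := Multiset.mem_map.mp this
    exact ⟨j, hj⟩
  choose σ hσ using hex
  have hinv : ∀ i, σ (σ i) = i := by
    intro i
    apply hzinj
    rw [hσ, hσ, Complex.conj_conj]
  have hσinj : Function.Injective σ := by
    intro i j hij
    rw [← hinv i, hij, hinv]
  have hne : ∀ i, σ i ≠ i := by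
    intro i h
    exact hnotreal i (by rw [← hσ, h])
  -- the pairing set
  set S : Finset (Fin l) := Finset.univ.filter (fun i => i < σ i) with hS
  have hunion : S ∪ S.image σ = Finset.univ := by
    ext i
    simp only [hS, Finset.mem_union, Finset.mem_filter, Finset.mem_image, Finset.mem_univ,
      true_and, iff_true]
    rcases lt_or_gt_of_ne (hne i).symm with h | h
    · exact Or.inl h
    · exact Or.inr ⟨σ i, by rw [hinv]; exact h, hinv i⟩
  have hdisj : Disjoint S (S.image σ) := by
    rw [Finset.disjoint_left]
    rintro a ha hb
    simp only [hS, Finset.mem_filter, Finset.mem_image, Finset.mem_univ, true_and] at ha hb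
    obtain ⟨j, hj, rfl⟩ := hb
    rw [hinv] at ha
    exact absurd (ha.trans hj) (lt_irrefl _)
  have hcard : l = S.card + S.card := by
    have h2 := Finset.card_union_of_disjoint hdisj
    rw [hunion, Finset.card_image_of_injective _ hσinj, Finset.card_univ, Fintype.card_fin] at h2
    exact h2
  have heven : Even l := ⟨S.card, hcard⟩
  -- the generic prod-splitting lemma
  have hsplit : ∀ F : Fin l → ℂ, ∏ i, F i = ∏ i ∈ S, (F i * F (σ i)) := by
    intro F
    rw [← hunion, Finset.prod_union hdisj, Finset.prod_image
      (fun a _ b _ h => hσinj h), ← Finset.prod_mul_distrib]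
  -- the w's
  set w : Fin l → ℂ := fun i => ∏ j ∈ Finset.univ.erase i, (z i - z j) with hw
  have herase : ∀ i : Fin l, (Finset.univ.erase i).image σ = Finset.univ.erase (σ i) := by
    intro i
    ext j
    simp only [Finset.mem_image, Finset.mem_erase, Finset.mem_univ, and_true, true_and]
    constructor
    · rintro ⟨k, hk, rfl⟩
      exact fun h => hk (hσinj h)
    · intro hj
      exact ⟨σ j, fun h => hj (by rw [← hinv j, h]), hinv j⟩
  have hwconj : ∀ i, w (σ i) = (starRingEnd ℂ) (w i) := by
    intro i
    rw [hw]
    simp only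
    rw [← herase i, Finset.prod_image (fun a _ b _ h => hσinj h), map_prod]
    exact Finset.prod_congr rfl (fun j _ => by rw [hσ, hσ, map_sub])
  have hwne : ∀ i, w i ≠ 0 := by
    intro i
    rw [hw]
    simp only
    rw [Finset.prod_ne_zero_iff]
    intro j hj
    exact sub_ne_zero.mpr (fun h => (Finset.mem_erase.mp hj).1 (hzinj h.symm))
  -- positивity part
  set c : ℝ := ∏ i ∈ S, Complex.normSq (w i) with hc
  have hcpos : 0 < c := Finset.prod_pos (fun i _ => Complex.normSq_pos.mpr (hwne i))
  have hQc : ∏ i, w i = (c : ℂ) := by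
    rw [hsplit w, hc]
    push_cast
    exact Finset.prod_congr rfl (fun i _ => by rw [hwconj i, Complex.mul_conj])
  -- splitting erase into Iio and Ioi
  have hIoiIio : ∀ i : Fin l, Finset.univ.erase i = Finset.Iio i ∪ Finset.Ioi i := by
    intro i
    ext j
    simp only [Finset.mem_erase, Finset.mem_univ, and_true, Finset.mem_union, Finset.mem_Iio,
      Finset.mem_Ioi]
    exact ne_iff_lt_or_gt
  have hdisj2 : ∀ i : Fin l, Disjoint (Finset.Iio i) (Finset.Ioi i) := by
    intro i
    rw [Finset.disjoint_left]
    intro a ha hb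
    simp only [Finset.mem_Iio] at ha
    simp only [Finset.mem_Ioi] at hb
    exact absurd (ha.trans hb) (lt_irrefl _)
  have hswap : (∏ i, ∏ j ∈ Finset.Iio i, (z i - z j)) = ∏ i, ∏ j ∈ Finset.Ioi i, (z j - z i) := by
    exact Finset.prod_comm' (by simp)
  set D : ℂ := ∏ i, ∏ j ∈ Finset.Ioi i, (z i - z j) ^ 2 with hD
  set N : ℕ := ∑ i : Fin l, (Finset.Ioi i).card with hN
  have hQD : ∏ i, w i = (-1 : ℂ) ^ N * D := by
    calc ∏ i, w i = ∏ i, ((∏ j ∈ Finset.Iio i, (z i - z j)) * ∏ j ∈ Finset.Ioi i, (z i - z j)) := by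
          refine Finset.prod_congr rfl (fun i _ => ?_)
          rw [hw]
          simp only
          rw [hIoiIio i, Finset.prod_union (hdisj2 i)]
      _ = (∏ i, ∏ j ∈ Finset.Iio i, (z i - z j)) * ∏ i, ∏ j ∈ Finset.Ioi i, (z i - z j) := by
          rw [Finset.prod_mul_distrib]
      _ = ∏ i, ∏ j ∈ Finset.Ioi i, ((z j - z i) * (z i - z j)) := by
          rw [hswap, ← Finset.prod_mul_distrib]
          exact Finset.prod_congr rfl (fun i _ => (Finset.prod_mul_distrib).symm)
      _ = ∏ i, ∏ j ∈ Finset.Ioi i, ((-1) * (z i - z j) ^ 2) := by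
          refine Finset.prod_congr rfl (fun i _ => Finset.prod_congr rfl (fun j _ => by ring))
      _ = (-1 : ℂ) ^ N * D := by
          rw [hN, hD]
          simp only [Finset.prod_mul_distrib, Finset.prod_const]
          rw [Finset.prod_pow_eq_pow_sum]
  -- parity of N
  have hN2 : N * 2 = l * (l - 1) := by
    have h1 : N = ∑ i ∈ Finset.range l, (l - 1 - i) := by
      rw [hN, ← Fin.sum_univ_eq_sum_range]
      exact Finset.sum_congr rfl (fun i _ => Fin.card_Ioi i)
    rw [h1, show (∑ i ∈ Finset.range l, (l - 1 - i)) = ∑ i ∈ Finset.range l, i from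
      Finset.sum_range_reflect (fun i => i) l, Finset.sum_range_id_mul_two]
  obtain ⟨m, hm⟩ := id heven
  have hNval : N = m * (2 * m - 1) := by
    have h2 : N * 2 = (m * (2 * m - 1)) * 2 := by
      rw [hN2, hm]
      cases m with
      | zero => simp
      | succ k =>
        have e1 : (k + 1) + (k + 1) - 1 = 2 * k + 1 := by omega
        have e2 : 2 * (k + 1) - 1 = 2 * k + 1 := by omega
        rw [e1, e2]
        ring
    exact Nat.eq_of_mul_eq_mul_right (by norm_num) h2
  have hmpos : 1 ≤ m := by omega
  have hNm : N % 2 = m % 2 := by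
    have hodd : (2 * m - 1) % 2 = 1 := by omega
    rw [hNval, Nat.mul_mod, hodd, mul_one, Nat.mod_mod_of_dvd _ (dvd_refl 2)]
  have hl2 : l / 2 = m := by omega
  have hsign : (-1 : ℂ) ^ N = (-1 : ℂ) ^ (l / 2) := by
    rw [hl2, neg_one_pow_eq_pow_mod_two, hNm, ← neg_one_pow_eq_pow_mod_two]
  refine ⟨heven, c, hcpos, ?_⟩
  have hDc : D = (-1 : ℂ) ^ N * (c : ℂ) := by
    have := hQD.symm.trans hQc
    have h1 : (-1 : ℂ) ^ N * ((-1 : ℂ) ^ N * D) = (-1 : ℂ) ^ N * (c : ℂ) := by rw [this]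
    rwa [← mul_assoc, ← mul_pow, neg_one_mul, neg_neg, one_pow, one_mul] at h1
  rw [hDc, hsign]
  push_cast
  ring
end

section
/- Let f(c, x) = c_m x^m + ⋯ + c₀ be a univariate polynomial whose coefficients c = (c₀,…,c_m) are real parameters, and let R(c) = Res(f, ∂f/∂x, x) (the resultant in x). If s₁ and s₂ lie in the same connected component of the set {c : R(c) ≠ 0}, then f(s₁, x) and f(s₂, x) have the same number of distinct real roots. -/
open Polynomial

/-- The polynomial `f(c,x) = c_m x^m + ⋯ + c₀` with parametric coefficients `c`. -/
noncomputable def paramPoly (m : ℕ) (c : Fin (m + 1) → ℝ) : Polynomial ℝ :=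
  ∑ i : Fin (m + 1), Polynomial.C (c i) * Polynomial.X ^ (i : ℕ)

/-- `R(c) = Res(f, ∂f/∂x, x)` as a function of the parameters `c`. -/
noncomputable def paramRes (m : ℕ) (c : Fin (m + 1) → ℝ) : ℝ :=
  resultant m (m - 1) (paramPoly m c) (Polynomial.derivative (paramPoly m c))

/-!
When `R(c) ≠ 0` the polynomial `f(c, ·)` has degree exactly `m` (otherwise the first column of
the Sylvester matrix vanishes) and `m` simple complex roots (a double root would be a common root
of `f` and `∂f/∂x`, giving a kernel vector `(z^k)_k` of the Sylvester matrix). Since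
`|f(c', z)| ≥ |lc| · δ ^ m` whenever `z` is at distance `≥ δ` from all roots of `f(c', ·)`,
for `c'` close to `c` every small disc around a root of `f(c, ·)` contains a root of
`f(c', ·)`, and by counting exactly one. Both root sets are closed under conjugation, so this
matching sends real roots to real roots. The number of real roots is therefore locally constant on `{R ≠ 0}`, hence
constant on its connected components.
-/

open Filter Topology ComplexConjugate Finset
open scoped Matrix

section Sylvester

variable {R S : Type*} [CommRing R] [CommRing S] [Algebra R S]

theorem sum_band_coeff_mul_pow (p : R[X]) {M N i : ℕ} (hp : p.natDegree ≤ M) (hi : i < N)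
    (z : S) :
    ∑ j ∈ range (M + N),
        (if i ≤ j ∧ j ≤ i + M then algebraMap R S (p.coeff (M + i - j)) else 0) *
          z ^ (M + N - 1 - j) = z ^ (N - 1 - i) * aeval z p := by
  simp only [ite_mul, zero_mul]
  rw [← sum_filter]
  have hband : (range (M + N)).filter (fun j => i ≤ j ∧ j ≤ i + M) = Ico i (i + (M + 1)) := by
    ext j
    simp only [mem_filter, mem_range, mem_Ico]
    omega
  rw [hband, sum_Ico_eq_sum_range, add_tsub_cancel_left, ← sum_range_reflect,
    aeval_eq_sum_range' (Nat.lt_succ_of_le hp), mul_sum]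
  refine sum_congr rfl fun k hk => ?_
  rw [mem_range] at hk
  rw [show M + i - (i + (M + 1 - 1 - k)) = k by omega,
    show M + N - 1 - (i + (M + 1 - 1 - k)) = (N - 1 - i) + k by omega, pow_add,
    Algebra.smul_def]
  ring

theorem map_sylvesterMatrix_mulVec_pow {m n : ℕ} {p q : R[X]} (hp : p.natDegree ≤ m)
    (hq : q.natDegree ≤ n) (z : S) :
    (sylvesterMatrix m n p q).map (algebraMap R S) *ᵥ
        (fun j : Fin (n + m) => z ^ (n + m - 1 - j)) =
      fun i : Fin (n + m) => if (i : ℕ) < n then z ^ (n - 1 - i) * aeval z p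
        else z ^ (m - 1 - (i - n)) * aeval z q := by
  ext i
  rw [Matrix.mulVec, dotProduct]
  simp only [Matrix.map_apply, sylvesterMatrix, Matrix.of_apply, apply_ite (algebraMap R S),
    map_zero]
  split_ifs with hi
  · rw [← sum_band_coeff_mul_pow p hp hi z, add_comm m n, ← Fin.sum_univ_eq_sum_range]
  · rw [← sum_band_coeff_mul_pow q hq (by omega) z, ← Fin.sum_univ_eq_sum_range]

theorem algebraMap_resultant_eq_zero_of_aeval_eq_zero [IsDomain S] {m n : ℕ} {p q : R[X]}
    (hp : p.natDegree ≤ m) (hq : q.natDegree ≤ n) (hnm : 0 < n + m) {z : S}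
    (hpz : aeval z p = 0) (hqz : aeval z q = 0) : algebraMap R S (resultant m n p q) = 0 := by
  rw [_root_.resultant, RingHom.map_det, ← Matrix.exists_mulVec_eq_zero_iff]
  refine ⟨fun j => z ^ (n + m - 1 - j), fun h => ?_, ?_⟩
  · simpa using congrFun h ⟨n + m - 1, by omega⟩
  · rw [RingHom.mapMatrix_apply, map_sylvesterMatrix_mulVec_pow hp hq]
    ext i
    simp [hpz, hqz]

theorem resultant_eq_zero_of_coeff_eq_zero {m n : ℕ} {p q : R[X]} (hp : p.coeff m = 0)
    (hq : q.coeff n = 0) (hnm : 0 < n + m) : _root_.resultant m n p q = 0 := by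
  refine Matrix.det_eq_zero_of_column_eq_zero ⟨0, hnm⟩ fun i => ?_
  simp only [sylvesterMatrix, Matrix.of_apply]
  split_ifs <;> try rfl
  · rw [show m + (i : ℕ) - 0 = m by omega, hp]
  · rw [show n + ((i : ℕ) - n) - 0 = n by omega, hq]

end Sylvester

theorem Finset.exists_pos_two_mul_le_dist {α : Type*} [MetricSpace α] (A : Finset α) :
    ∃ δ > 0, ∀ a ∈ A, ∀ a' ∈ A, a ≠ a' → 2 * δ ≤ dist a a' := by
  have hsmall : ∀ᶠ δ in 𝓝[>] (0 : ℝ), 0 < δ ∧ ∀ p ∈ A.offDiag, 2 * δ ≤ dist p.1 p.2 := by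
    refine eventually_mem_nhdsWithin.and ((eventually_all_finset _).2 fun p hp => ?_)
    have hd : 0 < dist p.1 p.2 := dist_pos.2 (mem_offDiag.1 hp).2.2
    exact nhdsWithin_le_nhds ((eventually_lt_nhds (half_pos hd)).mono fun δ h => by linarith)
  obtain ⟨δ, hδ, hsep⟩ := hsmall.exists
  exact ⟨δ, hδ, fun a ha a' ha' hne => hsep (a, a') (mem_offDiag.2 ⟨ha, ha', hne⟩)⟩

theorem Complex.card_filter_im_eq_zero_eq_of_forall_exists_dist_lt {A B : Finset ℂ} {δ : ℝ}
    (hcard : #B ≤ #A) (hsep : ∀ a ∈ A, ∀ a' ∈ A, a ≠ a' → 2 * δ ≤ dist a a')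
    (hnear : ∀ a ∈ A, ∃ b ∈ B, dist a b < δ)
    (hA : ∀ a ∈ A, conj a ∈ A) (hB : ∀ b ∈ B, conj b ∈ B) :
    #(A.filter (·.im = 0)) = #(B.filter (·.im = 0)) := by
  -- `φ` is injective by separation, hence onto `B` by counting; so `φ a` is the only point of `B`
  -- within `δ` of `a`, which forces `φ` to commute with conjugation.
  choose! φ hφB hφ using hnear
  have hclose : ∀ a ∈ A, ∀ a' ∈ A, ∀ z, dist a z < δ → dist a' z < δ → a = a' := by
    intro a ha a' ha' z hz hz'
    by_contra hne
    linarith [hsep a ha a' ha' hne, dist_triangle_right a a' z]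
  have hinj : Set.InjOn φ A := fun a ha a' ha' h =>
    hclose a ha a' ha' (φ a) (hφ a ha) (h ▸ hφ a' ha')
  have hsurj : A.image φ = B :=
    eq_of_subset_of_card_le (image_subset_iff.2 hφB) (by rwa [card_image_of_injOn hinj])
  have huniq : ∀ a ∈ A, ∀ b ∈ B, dist a b < δ → φ a = b := by
    intro a ha b hb hab
    obtain ⟨a', ha', rfl⟩ := mem_image.1 (hsurj ▸ hb)
    rw [hclose a ha a' ha' (φ a') hab (hφ a' ha')]
  have hconj : ∀ a ∈ A, φ (conj a) = conj (φ a) := fun a ha =>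
    huniq _ (hA a ha) _ (hB _ (hφB a ha)) (by rw [Complex.dist_conj_conj]; exact hφ a ha)
  have hreal : ∀ a ∈ A, a.im = 0 ↔ (φ a).im = 0 := by
    intro a ha
    simp only [← Complex.conj_eq_iff_im]
    constructor
    · intro h
      rw [← hconj a ha, h]
    · intro h
      exact hinj (hA a ha) ha (by rw [hconj a ha, h])
  refine card_nbij φ (fun a ha => ?_) (hinj.mono (coe_subset.2 (filter_subset _ _)))
    (fun b hb => ?_)
  · rw [mem_coe, mem_filter] at ha ⊢
    exact ⟨hφB a ha.1, (hreal a ha.1).1 ha.2⟩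
  · rw [mem_coe, mem_filter] at hb
    obtain ⟨a, ha, rfl⟩ := mem_image.1 (hsurj ▸ hb.1)
    exact ⟨a, mem_filter.2 ⟨ha, (hreal a ha).2 hb.2⟩, rfl⟩

theorem Polynomial.conj_mem_aroots {p : ℝ[X]} {z : ℂ} (hz : z ∈ p.aroots ℂ) :
    conj z ∈ p.aroots ℂ := by
  rw [mem_aroots] at hz ⊢
  refine ⟨hz.1, ?_⟩
  rw [show conj z = Complex.conjAe z from rfl, aeval_algHom_apply, hz.2, map_zero]

theorem Polynomial.card_roots_toFinset_eq_card_filter_aroots (p : ℝ[X]) :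
    #p.roots.toFinset = #((p.aroots ℂ).toFinset.filter (·.im = 0)) := by
  refine card_nbij ((↑) : ℝ → ℂ) (fun x hx => ?_) Complex.ofReal_injective.injOn
    (fun z hz => ?_)
  · simp only [mem_coe, Multiset.mem_toFinset, mem_roots', IsRoot.def] at hx
    simp only [mem_coe, mem_filter, Multiset.mem_toFinset, mem_aroots, Complex.ofReal_im,
      and_true]
    refine ⟨hx.1, ?_⟩
    rw [← Complex.coe_algebraMap, aeval_algebraMap_apply_eq_algebraMap_eval, hx.2, map_zero]
  · simp only [mem_coe, mem_filter, Multiset.mem_toFinset, mem_aroots] at hz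
    obtain ⟨⟨hp, hroot⟩, him⟩ := hz
    have hre : (z.re : ℂ) = z := Complex.ext rfl (by simp [him])
    refine ⟨z.re, ?_, hre⟩
    rw [← hre, ← Complex.coe_algebraMap, aeval_algebraMap_apply_eq_algebraMap_eval] at hroot
    simpa [mem_roots', hp] using hroot

theorem Polynomial.exists_mem_roots_dist_lt_of_norm_eval_lt {P : ℂ[X]} {n : ℕ}
    (hn : P.natDegree ≤ n) {z : ℂ} {δ : ℝ} (hδ : 0 ≤ δ) (h : ‖P.eval z‖ < ‖P.coeff n‖ * δ ^ n) :
    ∃ b ∈ P.roots, dist z b < δ := by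
  have hcoeff : P.coeff n ≠ 0 := by
    rintro hc
    rw [hc, norm_zero, zero_mul] at h
    exact (norm_nonneg _).not_gt h
  have hdeg : P.natDegree = n := hn.antisymm (le_natDegree_of_ne_zero hcoeff)
  by_contra! hfar
  have hprod : δ ^ n ≤ ‖(P.roots.map (z - ·)).prod‖ := by
    rw [show ‖(P.roots.map (z - ·)).prod‖ = normHom (P.roots.map (z - ·)).prod from rfl,
      map_multiset_prod, Multiset.map_map, ← hdeg, ← IsAlgClosed.card_roots_eq_natDegree,
      ← Multiset.prod_replicate, ← Multiset.map_const']
    exact Multiset.prod_map_le_prod_map₀ _ _ (fun _ _ => hδ)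
      (fun b hb => (hfar b hb).trans_eq (dist_eq_norm z b))
  rw [(IsAlgClosed.splits P).eval_eq_prod_roots, norm_mul, leadingCoeff, hdeg] at h
  exact h.not_ge (mul_le_mul_of_nonneg_left hprod (norm_nonneg _))

theorem Polynomial.eventually_card_roots_toFinset_eq {X : Type*} [TopologicalSpace X]
    {P : X → ℝ[X]} {x₀ : X} (hcoeff : ∀ k, Continuous fun x => (P x).coeff k)
    (hdeg : ∀ x, (P x).natDegree ≤ (P x₀).natDegree) (hnodup : ((P x₀).aroots ℂ).Nodup) :
    ∀ᶠ x in 𝓝 x₀, #(P x).roots.toFinset = #(P x₀).roots.toFinset := by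
  set d := (P x₀).natDegree
  set A := ((P x₀).aroots ℂ).toFinset
  obtain ⟨δ, hδ, hsep⟩ := A.exists_pos_two_mul_le_dist
  have hcont_aeval (z : ℂ) : Continuous fun x => aeval z (P x) := by
    have hsum :
        (fun x => aeval z (P x)) = fun x => ∑ i ∈ range (d + 1), (P x).coeff i • z ^ i :=
      _root_.funext fun x => aeval_eq_sum_range' (Nat.lt_succ_of_le (hdeg x)) z
    rw [hsum]
    fun_prop
  have hnear : ∀ᶠ x in 𝓝 x₀, ∀ a ∈ A, ∃ b ∈ ((P x).aroots ℂ).toFinset, dist a b < δ := by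
    refine (eventually_all_finset A).2 fun a ha => ?_
    obtain ⟨hP₀, ha₀⟩ := mem_aroots.1 (Multiset.mem_toFinset.1 ha)
    have hlc : ‖aeval a (P x₀)‖ < |(P x₀).coeff d| * δ ^ d := by
      rw [ha₀, norm_zero]
      exact mul_pos (abs_pos.2 (leadingCoeff_ne_zero.2 hP₀)) (pow_pos hδ d)
    filter_upwards [((hcont_aeval a).norm.tendsto x₀).eventually_lt
      (((hcoeff d).abs.mul continuous_const).tendsto x₀) hlc] with x hx
    obtain ⟨b, hb, hab⟩ := exists_mem_roots_dist_lt_of_norm_eval_lt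
      ((natDegree_map_le).trans (hdeg x)) hδ.le (z := a) (by
        rwa [eval_map_algebraMap, coeff_map, RCLike.norm_ofReal])
    exact ⟨b, Multiset.mem_toFinset.2 hb, hab⟩
  filter_upwards [hnear] with x hx
  rw [card_roots_toFinset_eq_card_filter_aroots, card_roots_toFinset_eq_card_filter_aroots]
  have hcard : #((P x).aroots ℂ).toFinset ≤ #A := by
    rw [Multiset.toFinset_card_of_nodup hnodup, IsAlgClosed.card_aroots_eq_natDegree]
    exact (Multiset.toFinset_card_le _).trans
      (IsAlgClosed.card_aroots_eq_natDegree.trans_le (hdeg x))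
  exact (Complex.card_filter_im_eq_zero_eq_of_forall_exists_dist_lt hcard hsep hx
    (fun a ha => Multiset.mem_toFinset.2 (conj_mem_aroots (Multiset.mem_toFinset.1 ha)))
    (fun b hb => Multiset.mem_toFinset.2 (conj_mem_aroots (Multiset.mem_toFinset.1 hb)))).symm

theorem eq_of_mem_connectedComponentIn_of_eventually_eq {X Y : Type*} [TopologicalSpace X]
    {U : Set X} {f : X → Y} (hf : ∀ x ∈ U, ∀ᶠ y in 𝓝 x, f y = f x) {x y : X} (hx : x ∈ U)
    (hy : y ∈ connectedComponentIn U x) : f x = f y := by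
  let _ : TopologicalSpace Y := ⊥
  have : DiscreteTopology Y := ⟨rfl⟩
  refine isPreconnected_connectedComponentIn.constant (fun z hz => ?_)
    (mem_connectedComponentIn hx) hy
  refine ContinuousAt.continuousWithinAt ?_
  rw [ContinuousAt, nhds_discrete Y, tendsto_pure]
  exact hf z (connectedComponentIn_subset U x hz)

section ParamPoly

variable {m : ℕ} {c : Fin (m + 1) → ℝ}

theorem coeff_paramPoly (m : ℕ) (c : Fin (m + 1) → ℝ) (k : ℕ) :
    (paramPoly m c).coeff k = if h : k < m + 1 then c ⟨k, h⟩ else 0 := by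
  simp only [paramPoly, finsetSum_coeff, coeff_C_mul_X_pow]
  split_ifs with h
  · rw [Fintype.sum_eq_single ⟨k, h⟩ fun i hi => if_neg fun hk => hi (Fin.ext hk.symm),
      if_pos rfl]
  · exact sum_eq_zero fun i _ => if_neg fun hk : k = i => h (hk ▸ i.isLt)

theorem natDegree_paramPoly_le (m : ℕ) (c : Fin (m + 1) → ℝ) : (paramPoly m c).natDegree ≤ m :=
  natDegree_le_iff_coeff_eq_zero.2 fun k hk => by
    rw [coeff_paramPoly, dif_neg (by omega)]

theorem continuous_coeff_paramPoly (m k : ℕ) :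
    Continuous fun c : Fin (m + 1) → ℝ => (paramPoly m c).coeff k := by
  simp only [coeff_paramPoly]
  split_ifs
  · exact continuous_apply _
  · exact continuous_const

theorem natDegree_paramPoly_of_paramRes_ne_zero (h : paramRes m c ≠ 0) :
    (paramPoly m c).natDegree = m := by
  rcases Nat.eq_zero_or_pos m with rfl | hm
  · exact Nat.le_zero.1 (natDegree_paramPoly_le 0 c)
  refine (natDegree_paramPoly_le m c).antisymm (le_natDegree_of_ne_zero fun hc => h ?_)
  refine resultant_eq_zero_of_coeff_eq_zero hc ?_ (by omega)
  rw [coeff_derivative, Nat.sub_add_cancel hm, hc, zero_mul]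

theorem nodup_aroots_paramPoly_of_paramRes_ne_zero (h : paramRes m c ≠ 0) :
    ((paramPoly m c).aroots ℂ).Nodup := by
  rcases Nat.eq_zero_or_pos m with rfl | hm
  · rw [eq_C_of_natDegree_eq_zero (natDegree_paramPoly_of_paramRes_ne_zero h), aroots_C]
    exact Multiset.nodup_zero
  classical
  refine Multiset.nodup_iff_count_le_one.2 fun z => not_lt.1 fun hz => h ?_
  rw [count_roots] at hz
  have hP : (paramPoly m c).map (algebraMap ℝ ℂ) ≠ 0 := by
    rintro hP
    simp [hP] at hz
  obtain ⟨hroot, hroot'⟩ := (one_lt_rootMultiplicity_iff_isRoot hP).1 hz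
  rw [derivative_map, IsRoot, eval_map_algebraMap] at hroot'
  rw [IsRoot, eval_map_algebraMap] at hroot
  exact (FaithfulSMul.algebraMap_eq_zero_iff ℝ ℂ).1
    (algebraMap_resultant_eq_zero_of_aeval_eq_zero (natDegree_paramPoly_le m c)
      ((natDegree_derivative_le _).trans (Nat.sub_le_sub_right (natDegree_paramPoly_le m c) 1))
      (by omega) hroot hroot')

theorem eventually_card_roots_toFinset_paramPoly_eq (h : paramRes m c ≠ 0) :
    ∀ᶠ c' in 𝓝 c, #(paramPoly m c').roots.toFinset = #(paramPoly m c).roots.toFinset :=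
  eventually_card_roots_toFinset_eq (continuous_coeff_paramPoly m)
    (fun c' =>
      (natDegree_paramPoly_le m c').trans (natDegree_paramPoly_of_paramRes_ne_zero h).ge)
    (nodup_aroots_paramPoly_of_paramRes_ne_zero h)

end ParamPoly

/-- if `s₁`, `s₂` lie in the same connected component of `{c | R(c) ≠ 0}`,
then `f(s₁,x)` and `f(s₂,x)` have the same number of distinct real roots. -/
theorem stmt_14 (m : ℕ) (s₁ s₂ : Fin (m + 1) → ℝ)
    (h₁ : paramRes m s₁ ≠ 0)
    (h₂ : s₂ ∈ connectedComponentIn {c : Fin (m + 1) → ℝ | paramRes m c ≠ 0} s₁) :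
    (paramPoly m s₁).roots.toFinset.card = (paramPoly m s₂).roots.toFinset.card :=
  eq_of_mem_connectedComponentIn_of_eventually_eq
    (fun _ hc => eventually_card_roots_toFinset_paramPoly_eq hc) h₁ h₂
end

section
/- For n = 3 the inequality ∏_{i=1}^{3}(x_i² + 2) ≥ 3·(x₁ + x₂ + x₃)² holds for all real x₁, x₂, x₃. -/
/-!
Merge two factors at a time: `(a² + 2)(b² + 2) ≥ (3/2)((a + b)² + 2)`, and then
`(u² + 2)(c² + 2) ≥ 2(u + c)²` with `u = a + b`. Both are sums of squares.
-/

theorem mul_sq_add_le_sq_add_mul_sq_add (k u c : ℝ) :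
    k * (u + c) ^ 2 ≤ (u ^ 2 + k) * (c ^ 2 + k) := by
  nlinarith [sq_nonneg (u * c - k)]

theorem three_mul_sq_add_two_le (a b : ℝ) :
    3 * ((a + b) ^ 2 + 2) ≤ 2 * ((a ^ 2 + 2) * (b ^ 2 + 2)) := by
  nlinarith [sq_nonneg (a * b - 1), sq_nonneg (a - b)]

theorem stmt_15 (x₁ x₂ x₃ : ℝ) :
    3 * (x₁ + x₂ + x₃) ^ 2 ≤ (x₁ ^ 2 + 2) * (x₂ ^ 2 + 2) * (x₃ ^ 2 + 2) := by
  have h₃ := mul_sq_add_le_sq_add_mul_sq_add 2 (x₁ + x₂) x₃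
  have h₁₂ := three_mul_sq_add_two_le x₁ x₂
  calc 3 * (x₁ + x₂ + x₃) ^ 2
      = 3 / 2 * (2 * (x₁ + x₂ + x₃) ^ 2) := by ring
    _ ≤ 3 / 2 * (((x₁ + x₂) ^ 2 + 2) * (x₃ ^ 2 + 2)) := by gcongr
    _ = 3 * ((x₁ + x₂) ^ 2 + 2) / 2 * (x₃ ^ 2 + 2) := by ring
    _ ≤ (x₁ ^ 2 + 2) * (x₂ ^ 2 + 2) * (x₃ ^ 2 + 2) := by gcongr; linarith
end

section
/- The infimum over all real x, y, z of the ratio (x²−x+1)(y²−y+1)(z²−z+1) / ((xyz)² − xyz + 1) equals the unique real root of k² + 6k − 3 = 0 lying in the interval (1/4, 1/2), i.e., −3 + 2√3. -/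
/-!
Write `f t = t² - t + 1` and `k = 2√3 - 3`, the positive root of `k² + 6k - 3 = 0`.
For fixed `x, y` with `u = xy`, the inequality `k f(uz) ≤ F f(z)` is a quadratic inequality
in `z`, so it holds for every `z` as soon as `k u² < F` and the discriminant condition
`(F - ku)² ≤ 4(F - ku²)(F - k)` hold; it suffices to check this for a lower bound `F` of
`f(x) f(y)`. Two bounds do the job: `(3/4)(u - 1)²` always (good enough, even with `k = 1/2`,
when `u² - 14u + 1 ≥ 0`), and `f(√u)²` for `u² - 14u + 1 ≤ 0`, by replacing `|x|, |y|` with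
their geometric mean. In the second case, with `g = √u`, the gap
`4(F - ku²)(F - k) - (F - ku)²` is `(2g² - (k + 5)g + 2)²` times a positive quartic
(using `k² + 6k - 3 = 0`); a root `t` of the square gives equality at `x = y = z = t`.
-/

namespace TrinomialRatio

noncomputable def f (t : ℝ) : ℝ := t ^ 2 - t + 1

lemma f_pos (t : ℝ) : 0 < f t := by
  unfold f
  nlinarith [sq_nonneg (2 * t - 1)]

lemma f_abs_le (t : ℝ) : f |t| ≤ f t := by
  unfold f
  rw [sq_abs]
  linarith [le_abs_self t]

lemma mul_f_le_of_discrim {k F u : ℝ} (hA : k * u ^ 2 < F)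
    (hD : (F - k * u) ^ 2 ≤ 4 * (F - k * u ^ 2) * (F - k)) (z : ℝ) :
    k * f (u * z) ≤ F * f z := by
  have h : F * f z - k * f (u * z) = (F - k * u ^ 2) * z ^ 2 - (F - k * u) * z + (F - k) := by
    unfold f
    ring
  nlinarith [sq_nonneg (2 * (F - k * u ^ 2) * z - (F - k * u))]

lemma three_div_four_mul_sq_le_f_mul_f (x y : ℝ) : 3 / 4 * (x * y - 1) ^ 2 ≤ f x * f y := by
  unfold f
  nlinarith [sq_nonneg (x + y - (x * y + 1) / 2)]

lemma f_sqrt_mul_sq_le {x y : ℝ} (h : (x * y) ^ 2 - 14 * (x * y) + 1 ≤ 0) :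
    f √(x * y) ^ 2 ≤ f x * f y := by
  have hxy : 0 < x * y := by nlinarith
  set g := √(x * y)
  have hg0 : 0 ≤ g := Real.sqrt_nonneg _
  have hgxy : g ^ 2 = x * y := Real.sq_sqrt hxy.le
  have hg : g ^ 2 = |x| * |y| := by rw [← abs_mul, abs_of_pos hxy, hgxy]
  have hmean : 2 * g ≤ |x| + |y| := by
    nlinarith [sq_nonneg (|x| - |y|), abs_nonneg x, abs_nonneg y]
  have hband : g ^ 2 - 4 * g + 1 ≤ 0 := by
    have : (g ^ 2 - 4 * g + 1) * (g ^ 2 + 4 * g + 1) ≤ 0 := by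
      rw [← hgxy] at h
      linear_combination h
    nlinarith
  have key :
      f |x| * f |y| - f g ^ 2 = (|x| + |y| - 2 * g) * (|x| + |y| + 2 * g - g ^ 2 - 1) := by
    unfold f
    linear_combination (1 + |x| + |y| - |x| * |y| - g ^ 2) * hg
  calc f g ^ 2 ≤ f |x| * f |y| := by
        have hsecond : 0 ≤ |x| + |y| + 2 * g - g ^ 2 - 1 := by linarith
        nlinarith [mul_nonneg (sub_nonneg.2 hmean) hsecond]
    _ ≤ f x * f y := mul_le_mul (f_abs_le x) (f_abs_le y) (f_pos _).le (f_pos _).le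

lemma half_mul_f_le {u : ℝ} (hu : 0 ≤ u ^ 2 - 14 * u + 1) (z : ℝ) :
    1 / 2 * f (u * z) ≤ 3 / 4 * (u - 1) ^ 2 * f z := by
  refine mul_f_le_of_discrim ?_ ?_ z
  · nlinarith [sq_nonneg u]
  · nlinarith [mul_nonneg (sq_nonneg (u - 1)) hu, sq_nonneg u]

variable {k : ℝ}

lemma mul_f_sq_mul_le (hk : k ^ 2 + 6 * k - 3 = 0) (hk1 : k ≤ 1 / 2) (g z : ℝ) :
    k * f (g ^ 2 * z) ≤ f g ^ 2 * f z := by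
  refine mul_f_le_of_discrim ?_ ?_ z
  · have h34 : 3 / 4 * g ^ 2 ≤ f g := by
      unfold f
      nlinarith [sq_nonneg (g - 2)]
    nlinarith [f_pos g, mul_le_mul h34 h34 (by positivity) (f_pos g).le, pow_pos (f_pos g) 2]
  · set R := (3 - 4 * k) * (g ^ 4 + 1) - (9 - 15 * k) * (g ^ 3 + g) + (15 - 25 * k) * g ^ 2
    have hfactor : 4 * (4 * (f g ^ 2 - k * (g ^ 2) ^ 2) * (f g ^ 2 - k) - (f g ^ 2 - k * g ^ 2) ^ 2)
        = (2 * g ^ 2 - (k + 5) * g + 2) ^ 2 * R := by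
      unfold f
      grind
    have hR : R = (3 - 4 * k) * (g ^ 2 - (21 - 3 * k) / 22 * g + 1) ^ 2
        + (18 - 34 * k) / 11 * g ^ 2 := by
      grind
    have hR0 : 0 ≤ R := by
      rw [hR]
      exact add_nonneg (mul_nonneg (by linarith) (sq_nonneg _))
        (mul_nonneg (by linarith) (sq_nonneg _))
    nlinarith [mul_nonneg (sq_nonneg (2 * g ^ 2 - (k + 5) * g + 2)) hR0]

lemma mul_f_mul_le (hk : k ^ 2 + 6 * k - 3 = 0) (hk1 : k ≤ 1 / 2) (x y z : ℝ) :
    k * f (x * y * z) ≤ f x * f y * f z := by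
  rcases le_or_gt 0 ((x * y) ^ 2 - 14 * (x * y) + 1) with hout | hin
  · calc k * f (x * y * z) ≤ 1 / 2 * f (x * y * z) :=
          mul_le_mul_of_nonneg_right hk1 (f_pos _).le
      _ ≤ 3 / 4 * (x * y - 1) ^ 2 * f z := half_mul_f_le hout z
      _ ≤ f x * f y * f z :=
          mul_le_mul_of_nonneg_right (three_div_four_mul_sq_le_f_mul_f x y) (f_pos z).le
  · have hg : √(x * y) ^ 2 = x * y := Real.sq_sqrt (by nlinarith)
    calc k * f (x * y * z) = k * f (√(x * y) ^ 2 * z) := by rw [hg]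
      _ ≤ f √(x * y) ^ 2 * f z := mul_f_sq_mul_le hk hk1 _ z
      _ ≤ f x * f y * f z := mul_le_mul_of_nonneg_right (f_sqrt_mul_sq_le hin.le) (f_pos z).le

lemma mul_f_cube_eq (hk : k ^ 2 + 6 * k - 3 = 0) {t : ℝ} (ht : 2 * t ^ 2 - (k + 5) * t + 2 = 0) :
    k * f (t * t * t) = f t * f t * f t := by
  unfold f
  grind

lemma isLeast_ratio (hk : k ^ 2 + 6 * k - 3 = 0) (hk0 : 0 ≤ k) :
    IsLeast {r : ℝ | ∃ x y z : ℝ, r = f x * f y * f z / f (x * y * z)} k := by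
  obtain ⟨t, ht⟩ : ∃ t : ℝ, 2 * (t * t) + -(k + 5) * t + 2 = 0 :=
    exists_quadratic_eq_zero two_ne_zero
      ⟨√((k + 1) * (k + 9)), by rw [discrim, Real.mul_self_sqrt (by positivity)]; ring⟩
  refine ⟨⟨t, t, t, ?_⟩, ?_⟩
  · rw [eq_div_iff (f_pos _).ne', mul_f_cube_eq hk (by linear_combination ht)]
  · rintro r ⟨x, y, z, rfl⟩
    rw [le_div_iff₀ (f_pos _)]
    exact mul_f_mul_le hk (by nlinarith) x y z

end TrinomialRatio

open TrinomialRatio in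
/-- the infimum over all real `x, y, z` of
`(x²−x+1)(y²−y+1)(z²−z+1) / ((xyz)² − xyz + 1)` equals `2√3 − 3`, the unique real root
of `k² + 6k − 3 = 0` lying in `(1/4, 1/2)`. -/
theorem stmt_19 :
    IsGLB {r : ℝ | ∃ x y z : ℝ,
        r = ((x ^ 2 - x + 1) * (y ^ 2 - y + 1) * (z ^ 2 - z + 1)) /
              ((x * y * z) ^ 2 - x * y * z + 1)}
      (2 * Real.sqrt 3 - 3) ∧
    (2 * Real.sqrt 3 - 3) ^ 2 + 6 * (2 * Real.sqrt 3 - 3) - 3 = 0 ∧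
    (2 * Real.sqrt 3 - 3) ∈ Set.Ioo (1 / 4 : ℝ) (1 / 2) := by
  have hs : √3 ^ 2 = 3 := Real.sq_sqrt (by norm_num)
  have hk : (2 * √3 - 3) ^ 2 + 6 * (2 * √3 - 3) - 3 = 0 := by linear_combination 4 * hs
  have hmem : 2 * √3 - 3 ∈ Set.Ioo (1 / 4 : ℝ) (1 / 2) := by
    constructor <;> nlinarith [Real.sqrt_nonneg 3]
  exact ⟨(isLeast_ratio hk (by linarith [hmem.1])).isGLB, hk, hmem⟩
end
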